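/- Let n ≥ 3 and let a ∈ A_n. If the associator (x, a, y) = 0 for all x, y ∈ A_n, then a = r·e_0 for some r ∈ ℝ, i.e. the pure part of a is zero. -/

import Mathlib

noncomputable section

open scoped Quaternion

/-- The Cayley–Dickson algebra `A n = ℝ^(2^n)` as a type. -/
def CD : ℕ → Type
  | 0 => ℝ
  | n + 1 => CD n × CD n

namespace CD

instance instAddCommGroup : (n : ℕ) → AddCommGroup (CD n)
  | 0 => inferInstanceAs (AddCommGroup ℝ)
  | n + 1 =>
    letI := instAddCommGroup n
    inferInstanceAs (AddCommGroup (CD n × CD n))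

instance instModule : (n : ℕ) → Module ℝ (CD n)
  | 0 => inferInstanceAs (Module ℝ ℝ)
  | n + 1 =>
    letI := instModule n
    inferInstanceAs (Module ℝ (CD n × CD n))

/-- Conjugation in the Cayley–Dickson algebra. -/
def conj : {n : ℕ} → CD n → CD n
  | 0, x => x
  | _ + 1, x => (conj x.1, -x.2)

/-- Cayley–Dickson multiplication. -/
def mul : {n : ℕ} → CD n → CD n → CD n
  | 0, x, y => Mul.mul (α := ℝ) x y
  | _ + 1, x, y =>
    (mul x.1 y.1 - mul (conj y.2) x.2, mul y.2 x.1 + mul x.2 (conj y.1))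

instance instMul (n : ℕ) : Mul (CD n) := ⟨mul⟩

/-- The multiplicative unit `e₀`. -/
def one : {n : ℕ} → CD n
  | 0 => (1 : ℝ)
  | _ + 1 => (one, 0)

instance instOne (n : ℕ) : One (CD n) := ⟨one⟩

/-- The Euclidean inner product on `A n = ℝ^(2^n)`. -/
def inner : {n : ℕ} → CD n → CD n → ℝ
  | 0, x, y => (x * y : ℝ)
  | _ + 1, x, y => inner x.1 y.1 + inner x.2 y.2

/-- The Euclidean norm on `A n = ℝ^(2^n)`. -/
def norm {n : ℕ} (x : CD n) : ℝ := Real.sqrt (inner x x)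

/-- `ã = (-a₂, a₁)`. -/
def tilde {n : ℕ} (a : CD (n + 1)) : CD (n + 1) := (-a.2, a.1)

/-- `ẽ₀ = (0, e₀)`. -/
def etilde (n : ℕ) : CD (n + 1) := ((0 : CD n), (1 : CD n))

/-- An element is pure if its conjugate is its negative. -/
def IsPure {n : ℕ} (a : CD n) : Prop := conj a = -a

/-- An element of `A (n+1)` is doubly pure if both of its coordinates are pure. -/
def IsDoublyPure {n : ℕ} (a : CD (n + 1)) : Prop := IsPure a.1 ∧ IsPure a.2

/-- The associator `(a,b,c) = (ab)c - a(bc)`. -/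
def assoc {n : ℕ} (a b c : CD n) : CD n := a * b * c - a * (b * c)

/-- An element is alternative if `(a,a,x) = 0` for all `x`. -/
def IsAlternative {n : ℕ} (a : CD n) : Prop := ∀ x : CD n, assoc a a x = 0

/-- An element is strongly alternative if `(a,a,x) = 0` and `(a,x,x) = 0` for all `x`. -/
def IsStronglyAlternative {n : ℕ} (a : CD n) : Prop :=
  (∀ x : CD n, assoc a a x = 0) ∧ (∀ x : CD n, assoc a x x = 0)

/-- The pure (imaginary) part of an element. -/
def im {n : ℕ} (a : CD n) : CD n := (2⁻¹ : ℝ) • (a - conj a)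

/-- `H a`, the span of `{e₀, ã, a, ẽ₀}`. -/
def H {n : ℕ} (a : CD (n + 1)) : Submodule ℝ (CD (n + 1)) :=
  Submodule.span ℝ {(1 : CD (n + 1)), tilde a, a, etilde n}

/-- The orthogonal complement of `H a`. -/
def Hperp {n : ℕ} (a : CD (n + 1)) : Set (CD (n + 1)) :=
  {x | ∀ y ∈ H a, inner y x = 0}

end CD

/-! Write `a = (a₁, a₂)` with `a₁, a₂ ∈ A_{n-1}`. Testing the associator `(x, a, y)` on
`x = (x₁, 0)`, `y = (y₁, 0)` shows `(a₂ x₁) y₁ = (a₂ y₁) x₁` for all `x₁, y₁`, which forces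
`a₂ = 0` as soon as `A_{n-1}` contains the quaternions. Testing it on `x = (x₁, 0)`, `y = ẽ₀` then
shows that `a₁` commutes with all of `A_{n-1}`, and the centre of `A_m` is `ℝ e₀` for `m ≥ 2`. -/

namespace CD

variable {n : ℕ}

instance : IsAddTorsionFree (CD n) := .of_isTorsionFree ℝ (CD n)

/- Pairing and projections of `CD (n + 1) = CD n × CD n`. Going through them keeps terms typed by
`CD (n + 1)` rather than by the product type, so that `rw` and `simp` see its multiplication. -/
def mk (x₁ x₂ : CD n) : CD (n + 1) := (x₁, x₂)

def fst (x : CD (n + 1)) : CD n := x.1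

def snd (x : CD (n + 1)) : CD n := x.2

@[simp] theorem fst_mk (x₁ x₂ : CD n) : (mk x₁ x₂).fst = x₁ := rfl

@[simp] theorem snd_mk (x₁ x₂ : CD n) : (mk x₁ x₂).snd = x₂ := rfl

@[simp] theorem mk_fst_snd (x : CD (n + 1)) : mk x.fst x.snd = x := rfl

theorem exists_eq_mk (x : CD (n + 1)) : ∃ x₁ x₂, x = mk x₁ x₂ := ⟨x.fst, x.snd, rfl⟩

theorem mk_inj {x₁ x₂ y₁ y₂ : CD n} : mk x₁ x₂ = mk y₁ y₂ ↔ x₁ = y₁ ∧ x₂ = y₂ := Prod.mk_inj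

theorem zero_eq_mk : (0 : CD (n + 1)) = mk 0 0 := rfl

@[simp] theorem snd_zero : (0 : CD (n + 1)).snd = 0 := rfl

theorem one_eq_mk : (1 : CD (n + 1)) = mk 1 0 := rfl

theorem neg_mk (x₁ x₂ : CD n) : -mk x₁ x₂ = mk (-x₁) (-x₂) := rfl

theorem mk_sub_mk (x₁ x₂ y₁ y₂ : CD n) : mk x₁ x₂ - mk y₁ y₂ = mk (x₁ - y₁) (x₂ - y₂) := rfl

theorem smul_mk (r : ℝ) (x₁ x₂ : CD n) : r • mk x₁ x₂ = mk (r • x₁) (r • x₂) := rfl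

theorem mk_mul_mk (x₁ x₂ y₁ y₂ : CD n) :
    mk x₁ x₂ * mk y₁ y₂ = mk (x₁ * y₁ - conj y₂ * x₂) (y₂ * x₁ + x₂ * conj y₁) := rfl

theorem conj_mk (x₁ x₂ : CD n) : conj (mk x₁ x₂) = mk (conj x₁) (-x₂) := rfl

theorem etilde_eq_mk : etilde n = mk 0 1 := rfl

theorem tilde_mk (x₁ x₂ : CD n) : tilde (mk x₁ x₂) = mk (-x₂) x₁ := rfl

@[simp]
theorem conj_zero : ∀ {n : ℕ}, conj (0 : CD n) = 0
  | 0 => rfl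
  | _ + 1 => by rw [zero_eq_mk, conj_mk, conj_zero, neg_zero]

@[simp]
theorem conj_one : ∀ {n : ℕ}, conj (1 : CD n) = 1
  | 0 => rfl
  | _ + 1 => by rw [one_eq_mk, conj_mk, conj_one, neg_zero]

@[simp]
theorem conj_neg : ∀ {n : ℕ} (x : CD n), conj (-x) = -conj x
  | 0, _ => rfl
  | _ + 1, x => by
    obtain ⟨x₁, x₂, rfl⟩ := exists_eq_mk x
    rw [neg_mk, conj_mk, conj_mk, conj_neg, neg_mk]

@[simp]
theorem conj_conj : ∀ {n : ℕ} (x : CD n), conj (conj x) = x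
  | 0, _ => rfl
  | _ + 1, x => by
    obtain ⟨x₁, x₂, rfl⟩ := exists_eq_mk x
    rw [conj_mk, conj_mk, conj_conj, neg_neg]

mutual
protected theorem mul_zero : ∀ {n : ℕ} (x : CD n), x * 0 = 0
  | 0, x => mul_zero (M₀ := ℝ) x
  | _ + 1, x => by
    obtain ⟨x₁, x₂, rfl⟩ := exists_eq_mk x
    rw [zero_eq_mk, mk_mul_mk]
    simp only [conj_zero, CD.mul_zero, CD.zero_mul, sub_zero, add_zero]
protected theorem zero_mul : ∀ {n : ℕ} (x : CD n), 0 * x = 0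
  | 0, x => zero_mul (M₀ := ℝ) x
  | _ + 1, x => by
    obtain ⟨x₁, x₂, rfl⟩ := exists_eq_mk x
    rw [zero_eq_mk, mk_mul_mk]
    simp only [CD.mul_zero, CD.zero_mul, sub_zero, add_zero]
end

-- Local: global ones would give `0`, `1` and `*` on `CD n` a second, merely defeq, elaboration.
local instance : MulZeroClass (CD n) where
  mul_zero := CD.mul_zero
  zero_mul := CD.zero_mul

protected theorem mul_one : ∀ {n : ℕ} (x : CD n), x * 1 = x
  | 0, x => mul_one (M := ℝ) x
  | _ + 1, x => by
    obtain ⟨x₁, x₂, rfl⟩ := exists_eq_mk x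
    rw [one_eq_mk, mk_mul_mk]
    simp only [conj_zero, conj_one, CD.mul_one, zero_mul, sub_zero, zero_add]

protected theorem one_mul : ∀ {n : ℕ} (x : CD n), 1 * x = x
  | 0, x => one_mul (M := ℝ) x
  | _ + 1, x => by
    obtain ⟨x₁, x₂, rfl⟩ := exists_eq_mk x
    rw [one_eq_mk, mk_mul_mk]
    simp only [CD.one_mul, CD.mul_one, zero_mul, mul_zero, sub_zero, add_zero]

local instance : MulZeroOneClass (CD n) where
  mul_one := CD.mul_one
  one_mul := CD.one_mul

mutual
protected theorem neg_mul : ∀ {n : ℕ} (x y : CD n), -x * y = -(x * y)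
  | 0, x, y => neg_mul (α := ℝ) x y
  | _ + 1, x, y => by
    obtain ⟨x₁, x₂, rfl⟩ := exists_eq_mk x
    obtain ⟨y₁, y₂, rfl⟩ := exists_eq_mk y
    rw [neg_mk, mk_mul_mk, mk_mul_mk, neg_mk, CD.neg_mul,
      CD.mul_neg, CD.mul_neg, CD.neg_mul]
    congr 1 <;> abel
protected theorem mul_neg : ∀ {n : ℕ} (x y : CD n), x * -y = -(x * y)
  | 0, x, y => mul_neg (α := ℝ) x y
  | _ + 1, x, y => by
    obtain ⟨x₁, x₂, rfl⟩ := exists_eq_mk x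
    obtain ⟨y₁, y₂, rfl⟩ := exists_eq_mk y
    rw [neg_mk, mk_mul_mk, mk_mul_mk, neg_mk, conj_neg,
      conj_neg, CD.neg_mul, CD.mul_neg, CD.neg_mul, CD.mul_neg]
    congr 1 <;> abel
end

local instance : HasDistribNeg (CD n) where
  neg_neg := neg_neg
  neg_mul := CD.neg_mul
  mul_neg := CD.mul_neg

theorem mul_mk_zero (x : CD (n + 1)) (y : CD n) :
    x * mk y 0 = mk (x.fst * y) (x.snd * conj y) := by
  obtain ⟨x₁, x₂, rfl⟩ := exists_eq_mk x
  rw [mk_mul_mk, conj_zero, zero_mul, sub_zero, zero_mul, zero_add, fst_mk, snd_mk]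

theorem mk_zero_mul (x : CD n) (y : CD (n + 1)) : mk x 0 * y = mk (x * y.fst) (y.snd * x) := by
  obtain ⟨y₁, y₂, rfl⟩ := exists_eq_mk y
  rw [mk_mul_mk, mul_zero, sub_zero, zero_mul, add_zero, fst_mk, snd_mk]

theorem mul_etilde (x : CD (n + 1)) : x * etilde n = tilde x := by
  obtain ⟨x₁, x₂, rfl⟩ := exists_eq_mk x
  rw [etilde_eq_mk, mk_mul_mk, tilde_mk]
  simp only [conj_zero, conj_one, mul_zero, one_mul, zero_sub, add_zero]

theorem etilde_mul (x : CD (n + 1)) : etilde n * x = mk (-conj x.snd) (conj x.fst) := by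
  obtain ⟨x₁, x₂, rfl⟩ := exists_eq_mk x
  rw [etilde_eq_mk, mk_mul_mk]
  simp only [zero_mul, mul_one, zero_sub, mul_zero, one_mul, zero_add, fst_mk, snd_mk]

theorem conj_etilde : conj (etilde n) = -etilde n := by
  rw [etilde_eq_mk, conj_mk, conj_zero, neg_mk, neg_zero]

theorem tilde_eq_zero {x : CD (n + 1)} : tilde x = 0 ↔ x = 0 := by
  obtain ⟨x₁, x₂, rfl⟩ := exists_eq_mk x
  rw [tilde_mk, zero_eq_mk, mk_inj, mk_inj, neg_eq_zero, and_comm]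

theorem smul_one_eq_mk (r : ℝ) : r • (1 : CD (n + 1)) = mk (r • 1) 0 := by
  rw [one_eq_mk, smul_mk, smul_zero]

theorem exists_eq_smul_one_of_conj_eq : ∀ {n : ℕ} {z : CD n}, conj z = z → ∃ r : ℝ, z = r • 1
  | 0, z, _ => ⟨z, (mul_one z).symm⟩
  | _ + 1, z, hz => by
    obtain ⟨z₁, z₂, rfl⟩ := exists_eq_mk z
    rw [conj_mk, mk_inj, neg_eq_self] at hz
    obtain ⟨r, rfl⟩ := exists_eq_smul_one_of_conj_eq hz.1
    exact ⟨r, by rw [hz.2, ← smul_one_eq_mk]⟩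

theorem exists_eq_smul_one_of_forall_commute {z : CD (n + 2)} (hz : ∀ x, Commute z x) :
    ∃ r : ℝ, z = r • 1 := by
  obtain ⟨z₁, z₂, rfl⟩ := exists_eq_mk z
  have hz₂ : z₂ = 0 := by
    have h := congrArg snd (hz (mk (etilde n) 0))
    rwa [mul_mk_zero, mk_zero_mul, snd_mk, snd_mk, snd_mk, conj_etilde, mul_neg, neg_eq_self,
      mul_etilde, tilde_eq_zero] at h
  have hz₁ : conj z₁ = z₁ := by
    have h := congrArg snd (hz (etilde (n + 1)))
    rw [mul_etilde, etilde_mul, tilde_mk, snd_mk, snd_mk, fst_mk] at h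
    exact h.symm
  obtain ⟨r, rfl⟩ := exists_eq_smul_one_of_conj_eq hz₁
  exact ⟨r, by rw [hz₂, ← smul_one_eq_mk]⟩

theorem eq_zero_of_forall_mul_right_comm {b : CD (n + 2)} (hb : ∀ x y, b * x * y = b * y * x) :
    b = 0 := by
  obtain ⟨b₁, b₂, rfl⟩ := exists_eq_mk b
  -- `ẽ₀` is pure and right multiplication by it is `tilde`, so this instance reads
  -- `-(b₂ ẽ₀) = b₂ ẽ₀` and `-(b₁ ẽ₀) = b₁ ẽ₀`.
  have h := hb (etilde (n + 1)) (mk (etilde n) 0)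
  simp only [mul_etilde, mul_mk_zero, tilde_mk, fst_mk, snd_mk, conj_etilde, mul_neg, neg_mul,
    neg_neg, mk_inj, neg_eq_self, tilde_eq_zero] at h
  obtain ⟨rfl, rfl⟩ := h
  exact zero_eq_mk.symm

theorem assoc_mk_zero_mk_zero (x y : CD n) (a : CD (n + 1)) :
    assoc (mk x 0) a (mk y 0) =
      mk (assoc x a.fst y) (a.snd * x * conj y - a.snd * conj y * x) := by
  rw [assoc, mk_zero_mul, mul_mk_zero, mul_mk_zero, mk_zero_mul, mk_sub_mk]
  rfl

theorem assoc_mk_zero_etilde (x : CD n) (a : CD (n + 1)) :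
    assoc (mk x 0) a (etilde n) = mk (x * a.snd - a.snd * x) (x * a.fst - a.fst * x) := by
  obtain ⟨a₁, a₂, rfl⟩ := exists_eq_mk a
  rw [assoc, mul_etilde, mul_etilde, mk_zero_mul, tilde_mk, tilde_mk, mk_zero_mul, mk_sub_mk]
  simp only [fst_mk, snd_mk, mul_neg, neg_sub_neg]

end CD

open CD in
/-- For `n ≥ 3`, if `(x, a, y) = 0` for all `x, y ∈ A n`, then
`a = r·e₀` for some real `r`. -/
theorem eq_smul_one_of_assoc_middle_eq_zero (n : ℕ) (hn : 3 ≤ n) (a : CD n)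
    (h : ∀ x y : CD n, CD.assoc x a y = 0) :
    ∃ r : ℝ, a = r • (1 : CD n) := by
  obtain ⟨k, rfl⟩ : ∃ k, n = k + 3 := ⟨n - 3, by omega⟩
  obtain ⟨a₁, a₂, rfl⟩ := exists_eq_mk a
  have ha₂ : a₂ = 0 := eq_zero_of_forall_mul_right_comm fun x y => by
    have := congrArg snd (h (mk x 0) (mk (conj y) 0))
    rwa [assoc_mk_zero_mk_zero, snd_mk, snd_mk, snd_zero, conj_conj, sub_eq_zero] at this
  obtain ⟨r, rfl⟩ := exists_eq_smul_one_of_forall_commute fun x => by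
    have := congrArg snd (h (mk x 0) (etilde _))
    rw [assoc_mk_zero_etilde, snd_mk, fst_mk, snd_zero, sub_eq_zero] at this
    exact this.symm
  exact ⟨r, by rw [ha₂, ← smul_one_eq_mk]⟩
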